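/- Let n ≥ 1 and let μ be a weak composition of n. A maximal chain of the interval [0̂, ([n],μ)] of B_n^w is ascent-free (its label word has no index i with label_i strictly smaller than label_{i+1} in the product order) if and only if it equals c(σ,c) for some ascent-free colored permutation (σ,c) of content μ. Hence the set of ascent-free maximal chains of [0̂, ([n],μ)] is exactly { c(σ,c) : (σ,c) ∈ Ninc_μ }. -/

import Mathlib

/-!
STATEMENT 9: the ascent-free maximal chains of the interval [0̂, ([n],μ)] of B_n^w are
exactly the chains c(σ,c) for (σ,c) ∈ Ninc_μ.

Weak compositions are modeled as multisets of colors (color j appearing μ(j) times);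
e_r corresponds to {r}.  Chains are lists from bottom to top, maximal chains of [x,y]
are cover-chains from x to y, and the label of a cover step (A,ν) ⋖ (A∪{x},ν+e_i) is
(x,i).  A chain is ascent-free when no consecutive pair of labels strictly increases in
the product order.
-/

/-- The weighted boolean algebra `B_n^w`. -/
@[ext] structure WSub (n : ℕ) where
  carrier : Finset (Fin n)
  wt : Multiset ℕ
  card_eq : Multiset.card wt = carrier.card

instance {n : ℕ} : PartialOrder (WSub n) where
  le p q := p.carrier ⊆ q.carrier ∧ p.wt ≤ q.wt
  le_refl p := ⟨subset_rfl, le_rfl⟩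
  le_trans a b c hab hbc := ⟨hab.1.trans hbc.1, hab.2.trans hbc.2⟩
  le_antisymm a b hab hba :=
    WSub.ext (Finset.Subset.antisymm hab.1 hba.1) (le_antisymm hab.2 hba.2)

/-- The label of the covering step `p ⋖ q`: (new letter, new color). -/
def lab {n : ℕ} (p q : WSub n) : ℕ × ℕ :=
  (∑ x ∈ q.carrier \ p.carrier, (x : ℕ), (q.wt - p.wt).sum)

/-- The label word of a chain (listed bottom to top). -/
def labelWord {n : ℕ} (c : List (WSub n)) : List (ℕ × ℕ) :=
  List.zipWith lab c c.tail

def chainElt {n : ℕ} (σ : Equiv.Perm (Fin n)) (c : Fin n → ℕ) (i : ℕ) : WSub n :=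
  ⟨(Finset.univ.filter (fun p : Fin n => (p : ℕ) < i)).image σ,
   (Finset.univ.filter (fun p : Fin n => (p : ℕ) < i)).val.map (fun p => c (σ p)),
   by rw [Multiset.card_map, Finset.card_image_of_injective _ σ.injective]; rfl⟩

/-- The maximal chain `c(σ,c)` associated with a colored permutation `(σ,c)`. -/
def chainOf {n : ℕ} (σ : Equiv.Perm (Fin n)) (c : Fin n → ℕ) : List (WSub n) :=
  (List.range (n + 1)).map (chainElt σ c)

def IsMaxChain' {α : Type*} [PartialOrder α] (x y : α) (c : List α) : Prop :=
  c.Chain' (· ⋖ ·) ∧ c.head? = some x ∧ c.getLast? = some y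

def content {n : ℕ} (c : Fin n → ℕ) : Multiset ℕ := Finset.univ.val.map c

/-- An ascent of the colored permutation `(σ, c)`. -/
def HasAscent {n : ℕ} {C : Type*} [Preorder C] (σ : Equiv.Perm (Fin n)) (c : Fin n → C) : Prop :=
  ∃ i : ℕ, ∃ h : i + 1 < n,
    σ ⟨i, Nat.lt_of_succ_lt h⟩ < σ ⟨i + 1, h⟩ ∧
      c (σ ⟨i, Nat.lt_of_succ_lt h⟩) ≤ c (σ ⟨i + 1, h⟩)


/-!
A cover step of `B_n^w` adds exactly one letter `x` and one color `i`, and is labeled `(x, i)`.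
Reading off these letters and colors along a maximal chain of `[0̂, ([n], μ)]` gives a colored
permutation `(σ, c)` of content `μ` whose chain `c(σ, c)` is the given one; conversely the label
word of `c(σ, c)` is `(σ(1), c(σ(1))), …, (σ(n), c(σ(n)))`. Consecutive letters are distinct, so
`(σ(k), c(σ(k))) < (σ(k+1), c(σ(k+1)))` in the product order exactly when `k` is an ascent.
-/

namespace WSub

variable {n : ℕ}

theorem eq_of_le_of_card_le {p q : WSub n} (h : p ≤ q) (hc : q.carrier.card ≤ p.carrier.card) :
    p = q := by
  have hcarrier : p.carrier = q.carrier := Finset.eq_of_subset_of_card_le h.1 hc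
  refine WSub.ext hcarrier (Multiset.eq_of_le_of_card_le h.2 ?_)
  rw [p.card_eq, q.card_eq, hcarrier]

theorem card_carrier_lt_of_lt {p q : WSub n} (h : p < q) : p.carrier.card < q.carrier.card :=
  lt_of_not_ge fun hc => h.ne (eq_of_le_of_card_le h.le hc)

theorem covBy_iff {p q : WSub n} :
    p ⋖ q ↔ ∃ x ∉ p.carrier, ∃ i, q.carrier = insert x p.carrier ∧ q.wt = i ::ₘ p.wt := by
  constructor
  · intro hpq
    have hcard := card_carrier_lt_of_lt hpq.lt
    obtain ⟨x, hxq, hxp⟩ := Finset.exists_mem_notMem_of_card_lt_card hcard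
    obtain ⟨i, hi⟩ : ∃ i, i ∈ q.wt - p.wt := by
      refine Multiset.exists_mem_of_ne_zero fun hqp => hcard.not_ge ?_
      rw [← p.card_eq, ← q.card_eq]
      exact Multiset.card_le_card (tsub_eq_zero_iff_le.mp hqp)
    let m : WSub n := ⟨insert x p.carrier, i ::ₘ p.wt, by
      rw [Multiset.card_cons, p.card_eq, Finset.card_insert_of_notMem hxp]⟩
    have hpm : p ≤ m := ⟨Finset.subset_insert _ _, Multiset.le_cons_self _ _⟩
    have hmq : m ≤ q := by
      refine ⟨Finset.insert_subset hxq hpq.le.1, ?_⟩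
      change i ::ₘ p.wt ≤ q.wt
      rw [← Multiset.singleton_add, ← le_tsub_iff_right hpq.le.2]
      exact Multiset.singleton_le.mpr hi
    obtain hmp | hmq' := hpq.eq_or_eq hpm hmq
    · exact absurd (hmp ▸ Finset.mem_insert_self x p.carrier) hxp
    · exact ⟨x, hxp, i, by rw [← hmq'], by rw [← hmq']⟩
  · rintro ⟨x, hxp, i, hcarrier, hwt⟩
    have hle : p ≤ q := ⟨hcarrier ▸ Finset.subset_insert _ _, hwt ▸ Multiset.le_cons_self _ _⟩
    have hcard : q.carrier.card = p.carrier.card + 1 := by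
      rw [hcarrier, Finset.card_insert_of_notMem hxp]
    refine ⟨lt_of_le_of_ne hle fun h => by simp [h] at hcard, fun m hpm hmq => ?_⟩
    have := card_carrier_lt_of_lt hpm
    have := card_carrier_lt_of_lt hmq
    omega

end WSub

theorem Fin.filter_val_lt_succ {n k : ℕ} (hk : k < n) :
    Finset.univ.filter (fun p : Fin n => (p : ℕ) < k + 1) =
      insert ⟨k, hk⟩ (Finset.univ.filter fun p : Fin n => (p : ℕ) < k) := by
  ext p
  simp only [Finset.mem_filter, Finset.mem_univ, true_and, Finset.mem_insert, Fin.ext_iff]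
  omega

section chainElt

variable {n : ℕ} (σ : Equiv.Perm (Fin n)) (c : Fin n → ℕ)

theorem chainElt_zero : chainElt σ c 0 = ⟨∅, 0, by simp⟩ := by
  ext <;> simp [chainElt]

theorem chainElt_self : chainElt σ c n = ⟨Finset.univ, content c, by simp [content]⟩ := by
  have hall : Finset.univ.filter (fun p : Fin n => (p : ℕ) < n) = Finset.univ :=
    Finset.filter_true_of_mem fun p _ => p.isLt
  ext1
  · simp only [chainElt, hall, Finset.image_univ_equiv]
  · simp only [chainElt, hall, content]
    exact (Multiset.map_map c σ _).symm.trans (congrArg _ (Multiset.map_univ_val_equiv σ))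

theorem apply_notMem_carrier_chainElt {k : ℕ} (hk : k < n) :
    σ ⟨k, hk⟩ ∉ (chainElt σ c k).carrier := by
  simp [chainElt]

theorem carrier_chainElt_succ {k : ℕ} (hk : k < n) :
    (chainElt σ c (k + 1)).carrier = insert (σ ⟨k, hk⟩) (chainElt σ c k).carrier := by
  simp only [chainElt, Fin.filter_val_lt_succ hk, Finset.image_insert]

theorem wt_chainElt_succ {k : ℕ} (hk : k < n) :
    (chainElt σ c (k + 1)).wt = c (σ ⟨k, hk⟩) ::ₘ (chainElt σ c k).wt := by
  have hk' : (⟨k, hk⟩ : Fin n) ∉ Finset.univ.filter fun p : Fin n => (p : ℕ) < k := by simp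
  simp only [chainElt, Fin.filter_val_lt_succ hk, Finset.insert_val_of_notMem hk',
    Multiset.map_cons]

theorem chainElt_covBy_succ {k : ℕ} (hk : k < n) : chainElt σ c k ⋖ chainElt σ c (k + 1) :=
  WSub.covBy_iff.mpr ⟨σ ⟨k, hk⟩, apply_notMem_carrier_chainElt σ c hk, c (σ ⟨k, hk⟩),
    carrier_chainElt_succ σ c hk, wt_chainElt_succ σ c hk⟩

theorem lab_chainElt_succ {k : ℕ} (hk : k < n) :
    lab (chainElt σ c k) (chainElt σ c (k + 1)) = ((σ ⟨k, hk⟩ : ℕ), c (σ ⟨k, hk⟩)) := by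
  rw [lab, carrier_chainElt_succ σ c hk, wt_chainElt_succ σ c hk,
    Finset.insert_sdiff_cancel (apply_notMem_carrier_chainElt σ c hk), ← Multiset.singleton_add,
    add_tsub_cancel_right, Finset.sum_singleton, Multiset.sum_singleton]

end chainElt

section chainOf

variable {n : ℕ} (σ : Equiv.Perm (Fin n)) (c : Fin n → ℕ)

@[simp]
theorem length_chainOf : (chainOf σ c).length = n + 1 := by
  simp [chainOf]

@[simp]
theorem getElem_chainOf {k : ℕ} (hk : k < (chainOf σ c).length) :
    (chainOf σ c)[k] = chainElt σ c k := by
  simp [chainOf]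

theorem isMaxChain'_chainOf :
    IsMaxChain' ⟨∅, 0, by simp⟩ ⟨Finset.univ, content c, by simp [content]⟩ (chainOf σ c) := by
  refine ⟨List.isChain_iff_getElem.mpr fun k hk => ?_, ?_, ?_⟩
  · simpa using chainElt_covBy_succ σ c (k := k) (by simpa using hk)
  · simp [chainOf, List.range_succ_eq_map, chainElt_zero]
  · simp [chainOf, List.range_succ, chainElt_self]

theorem labelWord_chainOf :
    labelWord (chainOf σ c) = List.ofFn fun k => ((σ k : ℕ), c (σ k)) := by
  refine List.ext_getElem (by simp [labelWord]) fun k hk _ => ?_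
  have hkn : k < n := by simpa [labelWord] using hk
  simpa [labelWord] using lab_chainElt_succ σ c hkn

end chainOf

theorem Prod.mk_lt_mk_iff_of_ne {α β : Type*} [PartialOrder α] [Preorder β] {a b : α} {i j : β}
    (hab : a ≠ b) : (a, i) < (b, j) ↔ a < b ∧ i ≤ j := by
  rw [Prod.mk_lt_mk, ← hab.le_iff_lt]
  exact or_iff_left_of_imp (And.imp_right le_of_lt)

theorem isChain_labelWord_chainOf_iff {n : ℕ} (σ : Equiv.Perm (Fin n)) (c : Fin n → ℕ) :
    (labelWord (chainOf σ c)).IsChain (fun a b => ¬ a < b) ↔ ¬ HasAscent σ c := by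
  rw [labelWord_chainOf, List.isChain_ofFn, HasAscent]
  simp only [not_exists]
  refine forall₂_congr fun i hi => not_congr ?_
  rw [Prod.mk_lt_mk_iff_of_ne (Fin.val_injective.ne (σ.injective.ne (by simp))), Fin.val_fin_lt]

section isChain_covBy

variable {n : ℕ} {d : List (WSub n)}

theorem getElem_le_getElem_of_isChain_covBy (hd : d.IsChain (· ⋖ ·)) {j k : ℕ} (hjk : j ≤ k)
    (hk : k < d.length) : d[j] ≤ d[k] := by
  obtain rfl | hjk := hjk.eq_or_lt
  · exact le_rfl
  · exact List.pairwise_iff_getElem.mp (hd.imp fun _ _ h => h.le).pairwise j k _ hk hjk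

theorem getElem_zero_of_head? (h0 : d.head? = some ⟨∅, 0, by simp⟩) (hd : 0 < d.length) :
    d[0] = ⟨∅, 0, by simp⟩ := by
  rw [List.head?_eq_getElem?, List.getElem?_eq_getElem hd] at h0
  exact Option.some_inj.mp h0

theorem card_carrier_getElem_of_isChain_covBy (hd : d.IsChain (· ⋖ ·))
    (h0 : d.head? = some ⟨∅, 0, by simp⟩) : ∀ k (hk : k < d.length), d[k].carrier.card = k
  | 0, hk => by rw [getElem_zero_of_head? h0 hk]; rfl
  | k + 1, hk => by
    obtain ⟨x, hx, -, hcarrier, -⟩ := WSub.covBy_iff.mp (hd.getElem k hk)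
    rw [hcarrier, Finset.card_insert_of_notMem hx,
      card_carrier_getElem_of_isChain_covBy hd h0 k (by omega)]

theorem exists_perm_of_isChain_covBy (hd : d.IsChain (· ⋖ ·)) (hlen : d.length = n + 1) :
    ∃ (σ : Equiv.Perm (Fin n)) (c : Fin n → ℕ), ∀ k (hk : k < n),
      d[k + 1].carrier = insert (σ ⟨k, hk⟩) d[k].carrier ∧
        d[k + 1].wt = c (σ ⟨k, hk⟩) ::ₘ d[k].wt := by
  have hstep (k : Fin n) := WSub.covBy_iff.mp (hd.getElem k (by omega))
  choose x hx i hcarrier hwt using hstep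
  have hx_inj : Function.Injective x := by
    refine Function.Injective.of_lt_imp_ne fun j k hjk hxjk => hx k ?_
    have hmem : x j ∈ d[j.val + 1].carrier := hcarrier j ▸ Finset.mem_insert_self _ _
    exact hxjk ▸ (getElem_le_getElem_of_isChain_covBy hd (Fin.lt_def.mp hjk) (by omega)).1 hmem
  let σ := Equiv.ofBijective x hx_inj.bijective_of_finite
  refine ⟨σ, fun v => i (σ.symm v), fun k hk => ?_⟩
  simp only [σ, Equiv.ofBijective_apply, Equiv.ofBijective_symm_apply_apply]
  exact ⟨hcarrier ⟨k, hk⟩, hwt ⟨k, hk⟩⟩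

theorem eq_chainOf_of_getElem_succ (h0 : d.head? = some ⟨∅, 0, by simp⟩)
    (hlen : d.length = n + 1) (σ : Equiv.Perm (Fin n)) (c : Fin n → ℕ)
    (hstep : ∀ k (hk : k < n), d[k + 1].carrier = insert (σ ⟨k, hk⟩) d[k].carrier ∧
      d[k + 1].wt = c (σ ⟨k, hk⟩) ::ₘ d[k].wt) :
    d = chainOf σ c := by
  have key : ∀ k (hk : k < d.length), d[k] = chainElt σ c k := by
    intro k
    induction k with
    | zero => intro hk; rw [getElem_zero_of_head? h0 hk, chainElt_zero]
    | succ k ih =>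
      intro hk
      have hkn : k < n := by omega
      ext1
      · rw [(hstep k hkn).1, carrier_chainElt_succ σ c hkn, ih (by omega)]
      · rw [(hstep k hkn).2, wt_chainElt_succ σ c hkn, ih (by omega)]
  exact List.ext_getElem (by simp [hlen]) fun k hk _ => by rw [key k hk, getElem_chainOf]

theorem exists_eq_chainOf_of_isMaxChain' {μ : Multiset ℕ} (hμ : Multiset.card μ = n)
    (hd : IsMaxChain' ⟨∅, 0, by simp⟩ ⟨Finset.univ, μ, by simp [hμ]⟩ d) :
    ∃ (σ : Equiv.Perm (Fin n)) (c : Fin n → ℕ), content c = μ ∧ d = chainOf σ c := by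
  obtain ⟨hchain, h0, hlast⟩ := hd
  rw [List.getLast?_eq_getElem?, List.getElem?_eq_some_iff] at hlast
  obtain ⟨hlt, hlast⟩ := hlast
  have hlen : d.length = n + 1 := by
    have := card_carrier_getElem_of_isChain_covBy hchain h0 _ hlt
    rw [hlast, Finset.card_univ, Fintype.card_fin] at this
    omega
  obtain ⟨σ, c, hstep⟩ := exists_perm_of_isChain_covBy hchain hlen
  obtain rfl := eq_chainOf_of_getElem_succ h0 hlen σ c hstep
  refine ⟨σ, c, ?_, rfl⟩
  simpa [chainElt_self] using congrArg WSub.wt hlast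

end isChain_covBy

theorem ascent_free_chains_are_ninc (n : ℕ) (μ : Multiset ℕ)
    (hμ : Multiset.card μ = n) :
    {d : List (WSub n) |
        IsMaxChain' (⟨∅, 0, by simp⟩ : WSub n) (⟨Finset.univ, μ, by simp [hμ]⟩ : WSub n) d ∧
          (labelWord d).Chain' (fun a b => ¬ a < b)} =
      (fun w : Equiv.Perm (Fin n) × (Fin n → ℕ) => chainOf w.1 w.2) ''
        {w | content w.2 = μ ∧ ¬ HasAscent w.1 w.2} := by
  ext d
  constructor
  · rintro ⟨hd, hasc⟩
    obtain ⟨σ, c, hc, rfl⟩ := exists_eq_chainOf_of_isMaxChain' hμ hd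
    exact ⟨(σ, c), ⟨hc, (isChain_labelWord_chainOf_iff σ c).mp hasc⟩, rfl⟩
  · rintro ⟨⟨σ, c⟩, ⟨rfl, hasc⟩, rfl⟩
    exact ⟨isMaxChain'_chainOf σ c, (isChain_labelWord_chainOf_iff σ c).mpr hasc⟩
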